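/- arXiv:2102.05731 — 2 statements merged into one kernel-verified Lean document; each statement's English description precedes it below -/
import Mathlib

section
/- For positive integers n, p, q with n ≤ p + q, the ring homomorphism from the polynomial ring ℤ[c_1,...,c_n] to ℤ[h_1,...,h_p, e_1,...,e_q] sending c_k to the sum over i+j=k of h_i·e_j (with h_0 = e_0 = 1, and h_i = 0 for i > p, e_j = 0 for j > q) is injective. -/
/-!
Follow `φ` by the specialisation `h_i ↦ e_i(x_1, …, x_p)`, `e_j ↦ e_j(y_1, …, y_q)`. Since
`e_k(x, y) = Σ_{i+j=k} e_i(x) e_j(y)`, the composite sends `c_k` to the `k`-th elementary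
symmetric polynomial in the `p + q` variables `x, y`, and the first `n ≤ p + q` elementary
symmetric polynomials are algebraically independent. So the composite, hence `φ`, is injective.
-/

open MvPolynomial

/-- The variable `h_i` (for `1 ≤ i ≤ p`), with `h_0 = 1` and `h_i = 0` for `i > p`. -/
noncomputable def Hvar (p q : ℕ) (i : ℕ) : MvPolynomial (Fin p ⊕ Fin q) ℤ :=
  if i = 0 then 1 else if h : i - 1 < p then X (Sum.inl ⟨i - 1, h⟩) else 0

/-- The variable `e_j` (for `1 ≤ j ≤ q`), with `e_0 = 1` and `e_j = 0` for `j > q`. -/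
noncomputable def Evar (p q : ℕ) (j : ℕ) : MvPolynomial (Fin p ⊕ Fin q) ℤ :=
  if j = 0 then 1 else if h : j - 1 < q then X (Sum.inr ⟨j - 1, h⟩) else 0

/-- The homomorphism `φ : ℤ[c_1,…,c_n] → ℤ[h_1,…,h_p,e_1,…,e_q]`,
`φ(c_k) = Σ_{i+j=k} h_i e_j`.  Here the variable indexed by `k : Fin n`
represents `c_{k+1}`. -/
noncomputable def phiHE (n p q : ℕ) :
    MvPolynomial (Fin n) ℤ →ₐ[ℤ] MvPolynomial (Fin p ⊕ Fin q) ℤ :=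
  aeval (fun k : Fin n =>
    ∑ i ∈ Finset.range (k.1 + 2), Hvar p q i * Evar p q (k.1 + 1 - i))

namespace Multiset

variable {R : Type*} [CommSemiring R]

theorem esymm_zero (s : Multiset R) : s.esymm 0 = 1 := by
  simp [esymm]

theorem zero_esymm_add_one (k : ℕ) : (0 : Multiset R).esymm (k + 1) = 0 := by
  simp [esymm, powersetCard_zero_right]

theorem esymm_cons (a : R) (s : Multiset R) (k : ℕ) :
    (a ::ₘ s).esymm (k + 1) = s.esymm (k + 1) + a * s.esymm k := by
  simp [esymm, sum_map_mul_left]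

theorem esymm_add (s t : Multiset R) (k : ℕ) :
    (s + t).esymm k = ∑ i ∈ Finset.range (k + 1), s.esymm i * t.esymm (k - i) := by
  induction s using Multiset.induction_on generalizing k with
  | empty =>
    rw [zero_add, Finset.sum_range_succ',
      Finset.sum_eq_zero fun i _ => by rw [zero_esymm_add_one, zero_mul]]
    simp [esymm_zero]
  | cons a s ih =>
    cases k with
    | zero => simp [esymm_zero]
    | succ k =>
      rw [cons_add, esymm_cons, ih, ih, Finset.sum_range_succ' _ (k + 1),
        Finset.sum_range_succ' _ (k + 1), Finset.mul_sum]
      simp only [esymm_cons, add_mul, Finset.sum_add_distrib, mul_assoc, esymm_zero,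
        Nat.add_sub_add_right]
      ring

end Multiset

namespace MvPolynomial

variable {σ τ R : Type*} [CommSemiring R] [Fintype σ] [Fintype τ]

theorem esymm_eq_zero_of_card_lt {k : ℕ} (h : Fintype.card σ < k) : esymm σ R k = 0 := by
  rw [esymm, Finset.powersetCard_eq_empty.2 (by simpa using h), Finset.sum_empty]

theorem esymm_sum (k : ℕ) :
    esymm (σ ⊕ τ) R k = ∑ i ∈ Finset.range (k + 1),
      rename Sum.inl (esymm σ R i) * rename Sum.inr (esymm τ R (k - i)) := by
  have huniv : (Finset.univ : Finset (σ ⊕ τ)).val =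
      Finset.univ.val.map Sum.inl + Finset.univ.val.map Sum.inr := by
    rw [← Finset.univ_disjSum_univ, Finset.val_disjSum]
    rfl
  simp only [rename_eq_aeval, aeval_esymm_eq_multiset_esymm]
  rw [esymm_eq_multiset_esymm, huniv, Multiset.map_add, Multiset.map_map, Multiset.map_map,
    Multiset.esymm_add]

end MvPolynomial

noncomputable def esymmSpecialization (p q : ℕ) :
    MvPolynomial (Fin p ⊕ Fin q) ℤ →ₐ[ℤ] MvPolynomial (Fin p ⊕ Fin q) ℤ :=
  aeval (Sum.elim (fun i => rename Sum.inl (esymm (Fin p) ℤ (i + 1)))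
    (fun j => rename Sum.inr (esymm (Fin q) ℤ (j + 1))))

theorem esymmSpecialization_Hvar (p q i : ℕ) :
    esymmSpecialization p q (Hvar p q i) = rename Sum.inl (esymm (Fin p) ℤ i) := by
  unfold Hvar
  split_ifs with h0 hi
  · simp [h0, esymm_zero]
  · rw [esymmSpecialization, aeval_X, Sum.elim_inl, Nat.sub_add_cancel (Nat.pos_of_ne_zero h0)]
  · rw [map_zero, esymm_eq_zero_of_card_lt (by rw [Fintype.card_fin]; omega), map_zero]

theorem esymmSpecialization_Evar (p q j : ℕ) :
    esymmSpecialization p q (Evar p q j) = rename Sum.inr (esymm (Fin q) ℤ j) := by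
  unfold Evar
  split_ifs with h0 hj
  · simp [h0, esymm_zero]
  · rw [esymmSpecialization, aeval_X, Sum.elim_inr, Nat.sub_add_cancel (Nat.pos_of_ne_zero h0)]
  · rw [map_zero, esymm_eq_zero_of_card_lt (by rw [Fintype.card_fin]; omega), map_zero]

theorem esymmSpecialization_comp_phiHE (n p q : ℕ) :
    (esymmSpecialization p q).comp (phiHE n p q) =
      (symmetricSubalgebra (Fin p ⊕ Fin q) ℤ).val.comp (esymmAlgHom (Fin p ⊕ Fin q) ℤ n) := by
  refine algHom_ext fun k => ?_
  rw [AlgHom.comp_apply, AlgHom.comp_apply, phiHE, aeval_X, Subalgebra.coe_val, esymmAlgHom_apply,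
    aeval_X, map_sum, esymm_sum]
  simp only [map_mul, esymmSpecialization_Hvar, esymmSpecialization_Evar]

theorem phiHE_injective_general (n p q : ℕ) (h : n ≤ p + q) : Function.Injective (phiHE n p q) := by
  have h_esymm : Function.Injective
      ((symmetricSubalgebra (Fin p ⊕ Fin q) ℤ).val.comp (esymmAlgHom (Fin p ⊕ Fin q) ℤ n)) :=
    Subtype.val_injective.comp (esymmAlgHom_injective ℤ (by simpa using h))
  rw [← esymmSpecialization_comp_phiHE, AlgHom.coe_comp] at h_esymm
  exact h_esymm.of_comp

theorem phiHE_injective (n p q : ℕ) (hn : 0 < n) (hp : 0 < p) (hq : 0 < q)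
    (h : n ≤ p + q) : Function.Injective (phiHE n p q) :=
  phiHE_injective_general n p q h
end

section
/- For a partition λ with conjugate λ', the involution ω of Λ = ℤ[c_1,c_2,...] defined by ω(c) = 1/c(-t) satisfies ω(S_λ(c)) = S_{λ'}(c), where S_λ(c) = det(c_{λ_i + j - i}) is the Schur determinant. -/
open MvPolynomial

/-- `Λ = ℤ[c_1, c_2, …]`; the variable of index `k : ℕ` represents `c_{k+1}`. -/
abbrev Lam : Type := MvPolynomial ℕ ℤ

/-- `c_k` for `k : ℤ`, with `c_0 = 1` and `c_k = 0` for `k < 0`. -/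
noncomputable def cInt (k : ℤ) : Lam :=
  if k < 0 then 0 else if k = 0 then 1 else X (k.toNat - 1)

/-- The series `c(t) = 1 + c_1 t + c_2 t² + ⋯`. -/
noncomputable def cSeries : PowerSeries Lam :=
  PowerSeries.mk fun k => if k = 0 then 1 else X (k - 1)

/-- `ω(c)_k` : the coefficient of `t^k` in `1/c(-t)`. -/
noncomputable def omegaC (k : ℕ) : Lam :=
  PowerSeries.coeff (R := Lam) (k + 1) ((PowerSeries.rescale (-1) cSeries).invOfUnit 1)

/-- The ℤ-algebra involution `ω` of `Λ`, sending `c(t)` to `1/c(-t)`. -/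
noncomputable def omegaHom : Lam →ₐ[ℤ] Lam := aeval omegaC

/-- The Schur determinant `S_λ(c) = det(c_{λ_i + j - i})_{1 ≤ i,j ≤ n}`. -/
noncomputable def SchurDet (n : ℕ) (l : Fin n → ℕ) : Lam :=
  Matrix.det (fun i j : Fin n => cInt ((l i : ℤ) + (j : ℤ) - (i : ℤ)))

/-! Let `e(t) = 1/c(-t)`, so that `ω c_k = e_k`. The lower-triangular Toeplitz matrices
`E = (e_{p-q})` and `C = ((-1)^{p+q} c_{p-q})` of size `n + m` are inverse to each other, and
`ω(S_λ)` is the minor of `E` on the rows `λ_i + n - 1 - i` and the first `n` columns. The rows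
`n + j - λ'_j` (`j < m`) are exactly the complementary ones, by the classical
`j < λ_i ↔ i < λ'_j`. Jacobi's complementary minor theorem for `E C = 1` turns `ω(S_λ)` into
`sgn σ` times the minor of `C` on the last `m` rows and these complementary columns, which is
`S_{λ'}` up to the signs `(-1)^{p+q}`. Here `σ` merges the two increasing lists of rows; its
inversions are the cells of `λ`, and all signs cancel because `|λ| = Σ λ'_j`. -/

open Finset

namespace PowerSeries

variable {R : Type*} [CommRing R]

noncomputable def toeplitz (N : ℕ) (f : PowerSeries R) : Matrix (Fin N) (Fin N) R :=
  Matrix.of fun p q => if q ≤ p then coeff (p - q : ℕ) f else 0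

variable {N : ℕ}

theorem toeplitz_apply (f : PowerSeries R) (p q : Fin N) :
    toeplitz N f p q = if q ≤ p then coeff (p - q : ℕ) f else 0 := rfl

theorem toeplitz_mul (f g : PowerSeries R) :
    toeplitz N f * toeplitz N g = toeplitz N (f * g) := by
  ext p q
  rw [Matrix.mul_apply, toeplitz_apply]
  split_ifs with hqp
  -- only `q ≤ r ≤ p` contribute; shifting `r` by `q` gives the antidiagonal sum of `g * f`
  · let F : ℕ → R := fun r =>
      if r ≤ p ∧ q ≤ r then coeff (p - r) f * coeff (r - q) g else 0
    have hF : ∀ r : Fin N, toeplitz N f p r * toeplitz N g r q = F r := by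
      intro r
      simp only [toeplitz_apply, F, Fin.le_def]
      split_ifs <;> simp_all
    have hsupp : ∑ r ∈ range N, F r = ∑ r ∈ Ico (q : ℕ) (p + 1), F r := by
      refine (Finset.sum_subset (fun r hr => ?_) fun r _ hr => ?_).symm
      · simp only [mem_Ico, mem_range] at hr ⊢; omega
      · simp only [mem_Ico, not_and_or] at hr
        exact if_neg (by omega)
    rw [Fintype.sum_congr _ _ hF, Fin.sum_univ_eq_sum_range F, hsupp, sum_Ico_eq_sum_range,
      mul_comm f, coeff_mul, Finset.Nat.sum_antidiagonal_eq_sum_range_succ_mk,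
      show (p : ℕ) + 1 - q = (p - q : ℕ) + 1 by omega]
    refine Finset.sum_congr rfl fun k hk => ?_
    rw [mem_range] at hk
    simp only [F, if_pos (show q + k ≤ (p : ℕ) ∧ (q : ℕ) ≤ q + k by omega),
      Nat.add_sub_cancel_left]
    rw [mul_comm, show (p : ℕ) - (q + k) = p - q - k by omega]
  · refine Finset.sum_eq_zero fun r _ => ?_
    simp only [toeplitz_apply]
    split_ifs <;> first | simp | omega

theorem toeplitz_one : toeplitz N (1 : PowerSeries R) = 1 := by
  ext p q
  rw [toeplitz_apply, coeff_one, Matrix.one_apply]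
  split_ifs <;> first | rfl | omega

theorem det_toeplitz (f : PowerSeries R) : (toeplitz N f).det = constantCoeff f ^ N := by
  rw [Matrix.det_of_isLowerTriangular (toeplitz N f) fun p q hpq => if_neg (not_le.2 hpq)]
  simp [toeplitz_apply]

end PowerSeries

theorem Matrix.det_toBlocks₁₁_eq_det_mul_det_toBlocks₂₂ {R α β : Type*} [CommRing R]
    [Fintype α] [Fintype β] [DecidableEq α] [DecidableEq β]
    {P Q : Matrix (α ⊕ β) (α ⊕ β) R} (h : P * Q = 1) :
    P.toBlocks₁₁.det = P.det * Q.toBlocks₂₂.det := by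
  obtain ⟨-, h₁₂, -, h₂₂⟩ :
      _ ∧ P.toBlocks₁₁ * Q.toBlocks₁₂ + P.toBlocks₁₂ * Q.toBlocks₂₂ = 0 ∧
        _ ∧ P.toBlocks₂₁ * Q.toBlocks₁₂ + P.toBlocks₂₂ * Q.toBlocks₂₂ = 1 := by
    rwa [← fromBlocks_toBlocks P, ← fromBlocks_toBlocks Q, fromBlocks_multiply,
      ← fromBlocks_one, fromBlocks_inj] at h
  have hmul : P * fromBlocks 1 Q.toBlocks₁₂ 0 Q.toBlocks₂₂ =
      fromBlocks P.toBlocks₁₁ 0 P.toBlocks₂₁ 1 := by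
    conv_lhs => rw [← fromBlocks_toBlocks P]
    rw [fromBlocks_multiply]
    simp [h₁₂, h₂₂]
  simpa [det_fromBlocks_zero₂₁, det_fromBlocks_zero₁₂] using (congrArg det hmul).symm

theorem Equiv.Perm.sign_eq_neg_one_pow_of_strictMono {n m : ℕ} (τ : Equiv.Perm (Fin (n + m)))
    (h₁ : StrictMono (τ ∘ Fin.castAdd m)) (h₂ : StrictMono (τ ∘ Fin.natAdd n)) :
    Equiv.Perm.sign τ =
      (-1) ^ ∑ b : Fin m, #{i | τ (Fin.natAdd n b) < τ (Fin.castAdd m i)} := by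
  have hsorted {a j : Fin (n + m)} (h : a < j → τ a < τ j) :
      (if a < j then if τ a < τ j then 1 else -1 else 1 : ℤˣ) = 1 := by
    split_ifs with hlt hτ <;> first | rfl | exact absurd (h hlt) hτ
  have hcross (i : Fin n) (b : Fin m) :
      (if Fin.castAdd m i < Fin.natAdd n b then
        if τ (Fin.castAdd m i) < τ (Fin.natAdd n b) then 1 else -1 else 1 : ℤˣ) =
        if τ (Fin.natAdd n b) < τ (Fin.castAdd m i) then -1 else 1 := by
    have hlt : Fin.castAdd m i < Fin.natAdd n b := by simp [Fin.lt_def]; omega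
    have hne : τ (Fin.castAdd m i) ≠ τ (Fin.natAdd n b) := τ.injective.ne hlt.ne
    rcases hne.lt_or_gt with h | h <;> simp [hlt, h, h.not_gt]
  have hnat (b : Fin m) (i : Fin n) : ¬Fin.natAdd n b < Fin.castAdd m i := by
    simp [Fin.lt_def]; omega
  rw [Equiv.Perm.sign_eq_prod_prod_Iio]
  simp_rw [← Finset.filter_gt_eq_Iio, Finset.prod_filter, Fin.prod_univ_add]
  simp only [hsorted fun h => h₁ ((Fin.strictMono_castAdd m).lt_iff_lt.1 h),
    hsorted fun h => h₂ ((Fin.natAdd_lt_natAdd_iff n).1 h), hcross, hnat, if_false,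
    prod_const_one, one_mul, mul_one, Finset.prod_ite, prod_const, ← prod_pow_eq_pow_sum]

section Conjugate

variable {n m : ℕ} {l : Fin n → ℕ}

def conjugate (m : ℕ) (l : Fin n → ℕ) (b : Fin m) : ℕ := #{i | b.1 + 1 ≤ l i}

theorem conjugate_le (b : Fin m) : conjugate m l b ≤ n :=
  (card_filter_le _ _).trans_eq (card_fin n)

theorem conjugate_antitone : Antitone (conjugate m l) := fun _ _ hbc =>
  card_le_card <| monotone_filter_right _ fun _ _ hi => le_trans (Nat.succ_le_succ hbc) hi

theorem lt_conjugate_iff (hl : Antitone l) {i : Fin n} {b : Fin m} :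
    i.1 < conjugate m l b ↔ b.1 < l i := by
  constructor
  · intro hi
    by_contra! hb
    have hsub : ({j | b.1 + 1 ≤ l j} : Finset (Fin n)) ⊆ Iio i := fun j hj => by
      simp only [mem_filter, mem_univ, true_and, mem_Iio] at hj ⊢
      by_contra! hij
      have := hl hij
      omega
    have := (card_le_card hsub).trans_eq (Fin.card_Iio i)
    exact absurd hi (not_lt.2 this)
  · intro hb
    have hsub : Iic i ⊆ ({j | b.1 + 1 ≤ l j} : Finset (Fin n)) := fun j hj => by
      simp only [mem_filter, mem_univ, true_and, mem_Iic] at hj ⊢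
      exact hb.trans_le (hl hj)
    exact (Fin.card_Iic i).symm.trans_le (card_le_card hsub)

end Conjugate

section Shuffle

variable {n m : ℕ} {l : Fin n → ℕ}

/-- The rows `λ_i + n - 1 - i` of the minor, listed increasingly: position `i` holds the part
`λ_{n-1-i}`. `colPos` lists the complementary rows `n + b - λ'_b`. -/
def rowPos (hm : ∀ i, l i ≤ m) (i : Fin n) : Fin (n + m) :=
  ⟨l (Fin.rev i) + i, by have := hm (Fin.rev i); omega⟩

def colPos (m : ℕ) (l : Fin n → ℕ) (b : Fin m) : Fin (n + m) :=
  ⟨n + b - conjugate m l b, by omega⟩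

theorem colPos_strictMono : StrictMono (colPos m l) := fun b c hbc => by
  have := conjugate_antitone (l := l) hbc.le
  have := conjugate_le (l := l) b
  simp only [Fin.lt_def, colPos] at hbc ⊢
  omega

theorem rowPos_strictMono (hl : Antitone l) (hm : ∀ i, l i ≤ m) : StrictMono (rowPos hm) := by
  intro i j hij
  have := hl (Fin.rev_lt_rev.2 hij).le
  simp only [Fin.lt_def, rowPos] at hij ⊢
  omega

theorem colPos_lt_rowPos_iff (hl : Antitone l) (hm : ∀ i, l i ≤ m) {i : Fin n} {b : Fin m} :
    colPos m l b < rowPos hm i ↔ b.1 < l (Fin.rev i) := by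
  have := lt_conjugate_iff (b := b) hl (i := Fin.rev i)
  have := conjugate_le (m := m) (l := l) b
  simp only [Fin.lt_def, colPos, rowPos, Fin.val_rev] at *
  omega

theorem rowPos_ne_colPos (hl : Antitone l) (hm : ∀ i, l i ≤ m) (i : Fin n) (b : Fin m) :
    rowPos hm i ≠ colPos m l b := by
  have := lt_conjugate_iff (b := b) hl (i := Fin.rev i)
  have := conjugate_le (m := m) (l := l) b
  simp only [ne_eq, Fin.ext_iff, colPos, rowPos, Fin.val_rev] at *
  omega

noncomputable def shufflePerm (hl : Antitone l) (hm : ∀ i, l i ≤ m) :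
    Equiv.Perm (Fin (n + m)) :=
  Equiv.ofBijective (Fin.append (rowPos hm) (colPos m l)) <| Finite.injective_iff_bijective.1 <|
    Fin.append_injective_iff.2 ⟨(rowPos_strictMono hl hm).injective, colPos_strictMono.injective,
      rowPos_ne_colPos hl hm⟩

theorem shufflePerm_comp_castAdd (hl : Antitone l) (hm : ∀ i, l i ≤ m) :
    shufflePerm hl hm ∘ Fin.castAdd m = rowPos hm :=
  funext fun _ => Fin.append_left _ _ _

theorem shufflePerm_comp_natAdd (hl : Antitone l) (hm : ∀ i, l i ≤ m) :
    shufflePerm hl hm ∘ Fin.natAdd n = colPos m l :=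
  funext fun _ => Fin.append_right _ _ _

theorem sign_shufflePerm (hl : Antitone l) (hm : ∀ i, l i ≤ m) :
    Equiv.Perm.sign (shufflePerm hl hm) = (-1) ^ ∑ b, conjugate m l b := by
  rw [Equiv.Perm.sign_eq_neg_one_pow_of_strictMono _
    (shufflePerm_comp_castAdd hl hm ▸ rowPos_strictMono hl hm)
    (shufflePerm_comp_natAdd hl hm ▸ colPos_strictMono)]
  refine congrArg _ (Fintype.sum_congr _ _ fun b => ?_)
  simp only [← Function.comp_apply (f := shufflePerm hl hm), shufflePerm_comp_castAdd,
    shufflePerm_comp_natAdd, colPos_lt_rowPos_iff hl hm]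
  unfold conjugate
  refine card_equiv Fin.revPerm fun i => ?_
  simp only [mem_filter, mem_univ, true_and, Fin.revPerm_apply]
  omega

end Shuffle

section Schur

open PowerSeries Matrix

noncomputable def omegaSeries : PowerSeries Lam := (rescale (-1) cSeries).invOfUnit 1

theorem constantCoeff_cSeries : constantCoeff cSeries = 1 := by
  simp [cSeries, ← coeff_zero_eq_constantCoeff_apply]

theorem rescale_cSeries_mul_omegaSeries : rescale (-1) cSeries * omegaSeries = 1 :=
  mul_invOfUnit _ _ (by simp [← coeff_zero_eq_constantCoeff_apply, coeff_rescale, cSeries])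

theorem constantCoeff_omegaSeries : constantCoeff omegaSeries = 1 := by
  simp [omegaSeries, constantCoeff_invOfUnit]

theorem omegaHom_coeff_cSeries (k : ℕ) : omegaHom (coeff k cSeries) = coeff k omegaSeries := by
  cases k with
  | zero =>
    simp [coeff_zero_eq_constantCoeff_apply, constantCoeff_cSeries, constantCoeff_omegaSeries]
  | succ k => simp [cSeries, omegaHom, omegaC, omegaSeries]

theorem cInt_natCast_sub (p q : ℕ) :
    cInt ((p : ℤ) - q) = if q ≤ p then coeff (p - q) cSeries else 0 := by
  simp only [cInt, cSeries, coeff_mk]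
  split_ifs <;> first | rfl | omega | congr 1; omega

theorem toeplitz_rescale_cSeries_apply {N : ℕ} (p q : Fin N) :
    toeplitz N (rescale (-1) cSeries) p q =
      (-1) ^ (p : ℕ) * (-1) ^ (q : ℕ) * cInt ((p : ℤ) - q) := by
  rw [toeplitz_apply, cInt_natCast_sub, coeff_rescale]
  by_cases h : q ≤ p
  · rw [if_pos h, if_pos (Fin.le_def.1 h), ← pow_add,
      show (p : ℕ) + q = (p - q : ℕ) + 2 * q by omega, pow_add, pow_mul, neg_one_sq, one_pow,
      mul_one]
  · rw [if_neg h, if_neg (mt Fin.le_def.2 h), mul_zero]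

variable {n m : ℕ} {l : Fin n → ℕ} (hl : Antitone l) (hm : ∀ i, l i ≤ m)

theorem omegaHom_schurDet :
    omegaHom (SchurDet n l) = ((toeplitz (n + m) omegaSeries).submatrix
      (finSumFinEquiv.trans (shufflePerm hl hm)) finSumFinEquiv).toBlocks₁₁.det := by
  change omegaHom (det (of fun i j : Fin n => cInt ((l i : ℤ) + j - i))) = _
  rw [AlgHom.map_det, ← det_submatrix_equiv_self Fin.revPerm]
  congr 1
  ext i j : 1
  have hcast : (l (Fin.rev i) : ℤ) + (Fin.rev j : ℕ) - (Fin.rev i : ℕ) =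
      ((rowPos hm i : ℕ) : ℤ) - (j : ℕ) := by
    simp only [rowPos, Fin.val_rev]; omega
  simp only [submatrix_apply, AlgHom.mapMatrix_apply, map_apply, of_apply, Fin.revPerm_apply,
    toBlocks₁₁, Equiv.trans_apply, finSumFinEquiv_apply_left, ← Function.comp_apply
    (f := shufflePerm hl hm), shufflePerm_comp_castAdd]
  rw [hcast, cInt_natCast_sub, toeplitz_apply, apply_ite omegaHom, map_zero,
    omegaHom_coeff_cSeries]
  rfl

theorem det_toeplitz_omegaSeries_submatrix :
    ((toeplitz (n + m) omegaSeries).submatrix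
      (finSumFinEquiv.trans (shufflePerm hl hm)) finSumFinEquiv).det =
      (-1) ^ ∑ c, conjugate m l c := by
  change (((toeplitz (n + m) omegaSeries).submatrix (shufflePerm hl hm) id).submatrix
    finSumFinEquiv finSumFinEquiv).det = _
  rw [det_submatrix_equiv_self, det_permute, det_toeplitz, constantCoeff_omegaSeries, one_pow,
    mul_one, sign_shufflePerm]
  push_cast
  rfl

theorem prod_neg_one_pow_mul_prod_neg_one_pow_colPos {R : Type*} [CommRing R] :
    (∏ b : Fin m, (-1 : R) ^ (n + b : ℕ)) * ∏ c, (-1) ^ (colPos m l c : ℕ) =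
      (-1) ^ ∑ c, conjugate m l c := by
  rw [← prod_mul_distrib, ← prod_pow_eq_pow_sum]
  refine Fintype.prod_congr _ _ fun c => ?_
  have := conjugate_le (l := l) c
  rw [← pow_add, show n + c + (colPos m l c : ℕ) = conjugate m l c + 2 * colPos m l c by
    simp only [colPos]; omega, pow_add, pow_mul, neg_one_sq, one_pow, mul_one]

theorem det_toBlocks₂₂_toeplitz_rescale_cSeries_submatrix :
    ((toeplitz (n + m) (rescale (-1) cSeries)).submatrix finSumFinEquiv
      (finSumFinEquiv.trans (shufflePerm hl hm))).toBlocks₂₂.det =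
      (-1) ^ (∑ c, conjugate m l c) * SchurDet m (conjugate m l) := by
  have hfactor : ((toeplitz (n + m) (rescale (-1) cSeries)).submatrix finSumFinEquiv
      (finSumFinEquiv.trans (shufflePerm hl hm))).toBlocks₂₂ =
      diagonal (fun b : Fin m => (-1) ^ (n + b : ℕ)) *
        (of fun i j : Fin m => cInt (conjugate m l i + j - i))ᵀ *
          diagonal fun c => (-1) ^ (colPos m l c : ℕ) := by
    ext b c : 1
    have := conjugate_le (l := l) c
    have hdiff : ((n + b : ℕ) : ℤ) - (colPos m l c : ℕ) = conjugate m l c + b - c := by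
      simp only [colPos]; omega
    simp only [toBlocks₂₂, of_apply, submatrix_apply, Equiv.trans_apply,
      finSumFinEquiv_apply_right, ← Function.comp_apply (f := shufflePerm hl hm),
      shufflePerm_comp_natAdd, toeplitz_rescale_cSeries_apply, Fin.val_natAdd, hdiff,
      mul_diagonal, diagonal_mul, transpose_apply]
    ring
  rw [hfactor, det_mul, det_mul, det_diagonal, det_diagonal, det_transpose, mul_right_comm,
    prod_neg_one_pow_mul_prod_neg_one_pow_colPos]
  rfl

end Schur

/-- `ω(S_λ(c)) = S_{λ'}(c)` where `λ'` is the conjugate partition,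
`λ'_j = #{i : λ_i ≥ j}`.  Here `λ` has `n` parts (weakly decreasing, possibly 0),
and the conjugate is recorded with `m` parts where `m ≥ λ_1`. -/
theorem omega_schur (n m : ℕ) (l : Fin n → ℕ) (hl : Antitone l)
    (hm : ∀ i, l i ≤ m) (l' : Fin m → ℕ)
    (hl' : ∀ j : Fin m, l' j = (Finset.univ.filter fun i : Fin n => j.1 + 1 ≤ l i).card) :
    omegaHom (SchurDet n l) = SchurDet m l' := by
  obtain rfl : l' = conjugate m l := funext hl'
  have hinv : (PowerSeries.toeplitz (n + m) omegaSeries).submatrix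
      (finSumFinEquiv.trans (shufflePerm hl hm)) finSumFinEquiv *
        (PowerSeries.toeplitz (n + m) (PowerSeries.rescale (-1) cSeries)).submatrix
          finSumFinEquiv (finSumFinEquiv.trans (shufflePerm hl hm)) = 1 := by
    rw [Matrix.submatrix_mul_equiv, PowerSeries.toeplitz_mul, mul_comm,
      rescale_cSeries_mul_omegaSeries, PowerSeries.toeplitz_one, Matrix.submatrix_one_equiv]
  rw [omegaHom_schurDet hl hm, Matrix.det_toBlocks₁₁_eq_det_mul_det_toBlocks₂₂ hinv,
    det_toeplitz_omegaSeries_submatrix, det_toBlocks₂₂_toeplitz_rescale_cSeries_submatrix,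
    ← mul_assoc, ← pow_add, ← two_mul, pow_mul, neg_one_sq, one_pow, one_mul]
end
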